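/- Let N ≥ 2 be an integer and suppose U : ℕ → ℝ satisfies, for all n ≥ 0, the tropical DTKQ equation U_{n+N} = max(0, −S_n, U_n, U_{n+1}, …, U_{n+N−1}), where S_n := ∑_{j=1}^{N−1} U_{n+j}. Then there exist a real constant C ≥ 0 and an integer m ≥ 0 such that U_n = C for all n ≥ m; i.e. every orbit reaches a constant fixed point after finitely many steps. -/

import Mathlib

/-!
Taking `j = N - 1` in the maximum gives `U (n + N - 1) ≤ U (n + N)`, so `U` is nondecreasing
from index `N - 1`, and the `0` in the maximum makes it nonnegative from index `N`. Once `n ≥ N`,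
the sum `S n` only involves nonnegative terms and the window `U n, …, U (n + N - 1)` is
nondecreasing, so every competitor in the maximum is dominated by the newest term
`U (n + N - 1) ≥ 0`. The recursion then reads `U (n + N) = U (n + N - 1)`, and the orbit is
constant from index `2N - 1` on.
-/

namespace TropicalDTKQ

open Finset

def IsOrbit (N : ℕ) (hne : (range N).Nonempty) (U : ℕ → ℝ) : Prop :=
  ∀ n, U (n + N) =
    max (max 0 (-∑ j ∈ range (N - 1), U (n + j + 1))) ((range N).sup' hne fun j => U (n + j))

variable {N : ℕ} {hne : (range N).Nonempty} {U : ℕ → ℝ}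

theorem IsOrbit.le_add (h : IsOrbit N hne U) (n : ℕ) {j : ℕ} (hj : j < N) :
    U (n + j) ≤ U (n + N) :=
  h n ▸ le_max_of_le_right (le_sup' (fun j => U (n + j)) (mem_range.mpr hj))

theorem IsOrbit.nonneg (h : IsOrbit N hne U) {n : ℕ} (hn : N ≤ n) : 0 ≤ U n := by
  obtain ⟨k, rfl⟩ := Nat.exists_eq_add_of_le' hn
  exact h k ▸ le_max_of_le_left (le_max_left _ _)

theorem IsOrbit.monotoneOn (h : IsOrbit N hne U) : MonotoneOn U (Set.Ici (N - 1)) := by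
  refine monotoneOn_nat_Ici_of_le_succ fun n hn => ?_
  have hN : N ≠ 0 := nonempty_range_iff.mp hne
  have := h.le_add (n - (N - 1)) (j := N - 1) (by omega)
  rwa [show n - (N - 1) + (N - 1) = n by omega, show n - (N - 1) + N = n + 1 by omega] at this

theorem IsOrbit.add_eq (h : IsOrbit N hne U) {n : ℕ} (hn : N ≤ n) :
    U (n + N) = U (n + (N - 1)) := by
  have hN : N ≠ 0 := nonempty_range_iff.mp hne
  have hsum : 0 ≤ ∑ j ∈ range (N - 1), U (n + j + 1) :=
    sum_nonneg fun j _ => h.nonneg (by omega)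
  have hlast : 0 ≤ U (n + (N - 1)) := h.nonneg (by omega)
  have hwindow : (range N).sup' hne (fun j => U (n + j)) = U (n + (N - 1)) :=
    le_antisymm
      (sup'_le _ _ fun j hj => h.monotoneOn (Set.mem_Ici.mpr (by omega))
        (Set.mem_Ici.mpr (by omega)) (by rw [mem_range] at hj; omega))
      (le_sup' (fun j => U (n + j)) (mem_range.mpr (by omega)))
  rw [h n, hwindow]
  exact max_eq_right (max_le hlast (by linarith))

theorem IsOrbit.eq_of_le (h : IsOrbit N hne U) {n : ℕ} (hn : 2 * N - 1 ≤ n) :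
    U n = U (2 * N - 1) := by
  induction n, hn using Nat.le_induction with
  | base => rfl
  | succ k hk ih =>
    have hN : N ≠ 0 := nonempty_range_iff.mp hne
    have := h.add_eq (n := k + 1 - N) (by omega)
    rwa [show k + 1 - N + N = k + 1 by omega, show k + 1 - N + (N - 1) = k by omega, ih] at this

end TropicalDTKQ

/-- every orbit of the tropical DTKQ equation reaches a constant
fixed point `C ≥ 0` after finitely many steps. -/
theorem tropical_dtkq_reaches_fixed_point (N : ℕ) (hN : 2 ≤ N) (U : ℕ → ℝ)
    (S : ℕ → ℝ) (hS : ∀ n : ℕ, S n = ∑ j ∈ Finset.range (N - 1), U (n + j + 1))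
    (hU : ∀ n : ℕ, U (n + N) =
      max (max 0 (-S n))
        ((Finset.range N).sup' (Finset.nonempty_range_iff.mpr (by omega))
          (fun j => U (n + j)))) :
    ∃ C : ℝ, 0 ≤ C ∧ ∃ m : ℕ, ∀ n : ℕ, m ≤ n → U n = C := by
  have horbit : TropicalDTKQ.IsOrbit N _ U := fun n => by rw [hU n, hS n]
  exact ⟨_, horbit.nonneg (by omega), _, fun _ => horbit.eq_of_le⟩
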